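/- arXiv:1706.10250 — 4 statements merged into one kernel-verified Lean document; each statement's English description precedes it below -/
import Mathlib

section
/- Let n ≥ 1 and let A and B be positive definite Hermitian n×n complex matrices. Then tr(A⁻¹B), tr(B⁻¹A), det A and det B are positive real numbers, and tr(A⁻¹B) ≤ (tr(B⁻¹A))^{n-1} · det B / det A. -/
/-!
Conjugating by `√A`, the matrix `M = (√A)⁻¹ B (√A)⁻¹` is positive definite, with
`tr M = tr(A⁻¹B)`, `tr M⁻¹ = tr(B⁻¹A)` and `det M = det B / det A`. In terms of the eigenvalues
`λᵢ > 0` of `M` the claim reads `∑ λᵢ ≤ (∑ λᵢ⁻¹)ⁿ⁻¹ ∏ λᵢ`, and dividing by `∏ λᵢ` this is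
`e_{n-1}(μ) ≤ e_1(μ)ⁿ⁻¹` for `μᵢ = λᵢ⁻¹`, which holds because every monomial of `e_{n-1}(μ)`
occurs in the expansion of `(∑ μᵢ)ⁿ⁻¹`.
-/

open Matrix Finset
open scoped ComplexOrder

theorem Finset.sum_prod_erase_le_pow_card_sub_one {R ι : Type*} [CommSemiring R] [PartialOrder R]
    [IsOrderedRing R] [DecidableEq ι] (s : Finset ι) {μ : ι → R} (hμ : ∀ i ∈ s, 0 ≤ μ i) :
    ∑ i ∈ s, ∏ j ∈ s.erase i, μ j ≤ (∑ j ∈ s, μ j) ^ (#s - 1) := by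
  induction s using Finset.induction_on with
  | empty => simp
  | @insert a s ha ih =>
    have hs : ∀ i ∈ s, 0 ≤ μ i := fun i hi => hμ i (mem_insert_of_mem hi)
    have hμa : 0 ≤ μ a := hμ a (mem_insert_self a s)
    have herase : ∀ i ∈ s, ∏ j ∈ (insert a s).erase i, μ j = μ a * ∏ j ∈ s.erase i, μ j :=
      fun i hi => by
        rw [erase_insert_of_ne (ne_of_mem_of_not_mem hi ha).symm,
          prod_insert fun h => ha (mem_of_mem_erase h)]
    rw [sum_insert ha, erase_insert ha, sum_congr rfl herase, ← mul_sum, sum_insert ha,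
      card_insert_of_notMem ha, Nat.add_sub_cancel]
    rcases s.eq_empty_or_nonempty with rfl | hne
    · simp
    obtain ⟨k, hk⟩ : ∃ k, #s = k + 1 := Nat.exists_eq_succ_of_ne_zero hne.card_pos.ne'
    rw [hk, Nat.add_sub_cancel] at ih
    rw [hk]
    set t := ∑ j ∈ s, μ j
    have ht : 0 ≤ t := sum_nonneg hs
    have hprod : ∏ j ∈ s, μ j ≤ t ^ (k + 1) := by
      rw [← hk, ← prod_const]
      exact prod_le_prod hs fun i hi => single_le_sum hs hi
    calc ∏ j ∈ s, μ j + μ a * ∑ i ∈ s, ∏ j ∈ s.erase i, μ j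
        ≤ t ^ (k + 1) + μ a * t ^ k := add_le_add hprod (mul_le_mul_of_nonneg_left (ih hs) hμa)
      _ = (μ a + t) * t ^ k := by ring
      _ ≤ (μ a + t) * (μ a + t) ^ k := by
          gcongr
          exact le_add_of_nonneg_left hμa
      _ = (μ a + t) ^ (k + 1) := by ring

theorem Finset.sum_le_sum_inv_pow_mul_prod {K ι : Type*} [Field K] [LinearOrder K]
    [IsStrictOrderedRing K] [Fintype ι] {l : ι → K} (hl : ∀ i, 0 < l i) :
    ∑ i, l i ≤ (∑ i, (l i)⁻¹) ^ (Fintype.card ι - 1) * ∏ i, l i := by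
  classical
  have hprod : 0 < ∏ i, l i := prod_pos fun i _ => hl i
  have hsum : ∑ i, l i = (∑ i, ∏ j ∈ univ.erase i, (l j)⁻¹) * ∏ i, l i := by
    rw [sum_mul]
    refine sum_congr rfl fun i _ => ?_
    rw [prod_inv_distrib, ← mul_prod_erase univ l (mem_univ i), mul_comm (l i),
      inv_mul_cancel_left₀ (prod_pos fun j _ => hl j).ne']
  rw [hsum, ← card_univ]
  exact mul_le_mul_of_nonneg_right
    (sum_prod_erase_le_pow_card_sub_one _ fun i _ => (inv_pos.2 (hl i)).le) hprod.le

namespace Matrix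

variable {𝕜 n : Type*} [RCLike 𝕜] [Fintype n] [DecidableEq n]

theorem IsHermitian.trace_cfc {A : Matrix n n 𝕜} (hA : A.IsHermitian) (f : ℝ → ℝ) :
    (cfc f A).trace = ∑ i, (f (hA.eigenvalues i) : 𝕜) := by
  rw [hA.cfc_eq, IsHermitian.cfc, Unitary.conjStarAlgAut_apply, trace_mul_cycle,
    Unitary.coe_star_mul_self, one_mul, trace_diagonal]
  rfl

theorem PosDef.trace_inv {A : Matrix n n 𝕜} (hA : A.PosDef) :
    A⁻¹.trace = ∑ i, ((hA.isHermitian.eigenvalues i)⁻¹ : 𝕜) := by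
  have hinv : A⁻¹ = cfc (fun x : ℝ => x⁻¹) A := by
    rw [nonsing_inv_eq_ringInverse, cfc_ringInverse_id A hA.isUnit hA.isHermitian.isSelfAdjoint]
  rw [hinv, hA.isHermitian.trace_cfc]
  push_cast
  rfl

-- The `μ i` are the eigenvalues of `(√A)⁻¹ * B * (√A)⁻¹`, i.e. the roots of `det (B - μ A) = 0`.
open scoped MatrixOrder in
theorem PosDef.exists_relative_eigenvalues {A B : Matrix n n 𝕜} (hA : A.PosDef) (hB : B.PosDef) :
    ∃ μ : n → ℝ, (∀ i, 0 < μ i) ∧ (A⁻¹ * B).trace = ∑ i, (μ i : 𝕜) ∧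
      (B⁻¹ * A).trace = ∑ i, ((μ i)⁻¹ : 𝕜) ∧ B.det / A.det = ∏ i, (μ i : 𝕜) := by
  set S := CFC.sqrt A
  have hS : S.PosDef := (IsStrictlyPositive.sqrt A hA.isStrictlyPositive).posDef
  have hSS : S * S = A := CFC.sqrt_mul_sqrt_self A hA.posSemidef.nonneg
  have hM : (S⁻¹ * B * S⁻¹).PosDef := by
    simpa [hS.inv.isHermitian.eq] using
      hB.conjTranspose_mul_mul_same (mulVec_injective_of_isUnit hS.inv.isUnit)
  refine ⟨hM.isHermitian.eigenvalues, hM.eigenvalues_pos, ?_, ?_, ?_⟩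
  · rw [← hM.isHermitian.trace_eq_sum_eigenvalues, ← hSS, mul_inv_rev, Matrix.mul_assoc,
      trace_mul_comm]
  · rw [← hM.trace_inv, mul_inv_rev, mul_inv_rev,
      nonsing_inv_nonsing_inv _ ((isUnit_iff_isUnit_det S).mp hS.isUnit), ← hSS,
      trace_mul_comm S, Matrix.mul_assoc]
  · rw [← hM.isHermitian.det_eq_prod_eigenvalues, det_mul, det_mul, ← hSS, det_mul,
      det_nonsing_inv, Ring.inverse_eq_inv']
    field_simp [hS.det_pos.ne']

end Matrix

/-- For positive definite Hermitian `n × n` complex matrices `A`, `B` (`n ≥ 1`),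
the traces `tr(A⁻¹B)`, `tr(B⁻¹A)` and the determinants `det A`, `det B` are positive
real numbers, and `tr(A⁻¹B) ≤ (tr(B⁻¹A))^(n-1) * det B / det A`. -/
theorem trace_inv_mul_le_trace_pow_mul_det_div (n : ℕ) (hn : 1 ≤ n)
    (A B : Matrix (Fin n) (Fin n) ℂ) (hA : A.PosDef) (hB : B.PosDef) :
    0 < (A⁻¹ * B).trace.re ∧ (A⁻¹ * B).trace.im = 0 ∧
    0 < (B⁻¹ * A).trace.re ∧ (B⁻¹ * A).trace.im = 0 ∧
    0 < A.det.re ∧ A.det.im = 0 ∧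
    0 < B.det.re ∧ B.det.im = 0 ∧
    (A⁻¹ * B).trace.re ≤ ((B⁻¹ * A).trace.re) ^ (n - 1) * (B.det.re / A.det.re) := by
  have : Nonempty (Fin n) := ⟨⟨0, hn⟩⟩
  obtain ⟨μ, hμ, htrAB, htrBA, hdet⟩ := hA.exists_relative_eigenvalues hB
  obtain ⟨a, ha, hdetA⟩ := RCLike.pos_iff_exists_ofReal.mp hA.det_pos
  obtain ⟨b, hb, hdetB⟩ := RCLike.pos_iff_exists_ofReal.mp hB.det_pos
  rw [← hdetA, ← hdetB] at hdet ⊢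
  have hprod : b / a = ∏ i, μ i := by exact_mod_cast hdet
  rw [htrAB, htrBA]
  simp only [RCLike.ofReal_eq_complex_ofReal, ← Complex.ofReal_inv, ← Complex.ofReal_sum,
    Complex.ofReal_re, Complex.ofReal_im, hprod, true_and]
  refine ⟨sum_pos (fun i _ => hμ i) univ_nonempty,
    sum_pos (fun i _ => inv_pos.2 (hμ i)) univ_nonempty, ha, hb, ?_⟩
  simpa using sum_le_sum_inv_pow_mul_prod hμ
end

section
/- Let (M, μ) be a probability space and ρ : M × M → [0, ∞) a measurable function which is symmetric, i.e. ρ(x, y) = ρ(y, x) for all x, y. Assume: (i) for every x ∈ M the function ρ(x, ·) is μ-integrable, with mean ρ̄ₓ = ∫_M ρ(x, y) dμ(y), and x ↦ ρ̄ₓ is measurable; (ii) there are constants C₁ > 0 and C₂ > 0 such that ∫_M exp((ρ(x, y) − ρ̄ₓ)/C₁) dμ(y) ≤ C₂ for every x ∈ M; (iii) there is C₃ ≥ 0 with ∬_{M×M} ρ(x, y)² dμ(x) dμ(y) ≤ C₃². Then ∬_{M×M} exp(ρ(x, y)/(2C₁)) dμ(x) dμ(y) ≤ C₂ · exp(C₃/(2C₁)).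 -/
/-!
Write `r x = ∫ ρ(x, ·) dμ` and `m = ∫ r dμ`. Factoring
`exp (ρ(x,y)/(2C₁)) = exp (r x/(2C₁)) · exp ((ρ(x,y) - r x)/C₁)^(1/2)` and using
`∫ √g ≤ √(∫ g)` on each slice bounds the inner integral by `√C₂ · exp (r x/(2C₁))`.
Jensen's inequality for `y ↦ ρ(x,y) - r y`, whose mean is `r x - m`, followed by Fubini and the
symmetry of `ρ`, gives `∫ exp ((r - m)/(2C₁)) dμ ≤ √C₂`. Hence the double integral is at most
`C₂ · exp (m/(2C₁))`, and `m ≤ C₃` by Cauchy–Schwarz.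
-/

open MeasureTheory Real
open scoped ENNReal

theorem ofReal_exp_div_two_mul (t c : ℝ) :
    ENNReal.ofReal (exp (t / (2 * c))) = ENNReal.ofReal (exp (t / c)) ^ (2⁻¹ : ℝ) := by
  rw [ENNReal.ofReal_rpow_of_nonneg (exp_pos _).le (by norm_num), ← exp_mul, mul_comm (2 : ℝ),
    ← div_div, div_eq_mul_inv _ (2 : ℝ)]

theorem ofReal_sq_rpow_inv_two {t : ℝ} (ht : 0 ≤ t) :
    ENNReal.ofReal (t ^ 2) ^ (2⁻¹ : ℝ) = ENNReal.ofReal t := by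
  rw [ENNReal.ofReal_pow ht, ← ENNReal.rpow_natCast, ← ENNReal.rpow_mul]
  norm_num

section Lintegral

variable {α : Type*} [MeasurableSpace α] {μ : Measure α}

theorem lintegral_ofReal_exp_div_eq_mul (f : α → ℝ) (b c : ℝ) :
    ∫⁻ a, ENNReal.ofReal (exp (f a / c)) ∂μ
      = ENNReal.ofReal (exp (b / c)) * ∫⁻ a, ENNReal.ofReal (exp ((f a - b) / c)) ∂μ := by
  rw [← lintegral_const_mul' _ _ ENNReal.ofReal_ne_top]
  refine lintegral_congr fun a => ?_
  rw [← ENNReal.ofReal_mul (exp_pos _).le, ← exp_add, ← add_div, add_sub_cancel]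

theorem integrable_and_integral_le_of_lintegral_ofReal_le {f : α → ℝ} (hf : AEMeasurable f μ)
    (hf₀ : ∀ a, 0 ≤ f a) {C : ℝ} (hC : 0 ≤ C)
    (hfC : ∫⁻ a, ENNReal.ofReal (f a) ∂μ ≤ ENNReal.ofReal C) :
    Integrable f μ ∧ ∫ a, f a ∂μ ≤ C := by
  have hfi : Integrable f μ :=
    ⟨hf.aestronglyMeasurable, (hasFiniteIntegral_iff_ofReal (.of_forall hf₀)).2
      (hfC.trans_lt ENNReal.ofReal_lt_top)⟩
  refine ⟨hfi, (ENNReal.ofReal_le_ofReal_iff hC).1 ?_⟩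
  rwa [ofReal_integral_eq_lintegral_ofReal hfi (.of_forall hf₀)]

variable [IsProbabilityMeasure μ]

theorem lintegral_rpow_le_rpow_lintegral {g : α → ℝ≥0∞} (hg : AEMeasurable g μ) {p : ℝ}
    (hp₀ : 0 < p) (hp₁ : p ≤ 1) : ∫⁻ a, g a ^ p ∂μ ≤ (∫⁻ a, g a ∂μ) ^ p := by
  have h := eLpNorm'_le_eLpNorm'_of_exponent_le hp₀ hp₁ μ hg.aestronglyMeasurable
  simp only [eLpNorm'_eq_lintegral_enorm, enorm_eq_self, ENNReal.rpow_one, div_one] at h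
  calc ∫⁻ a, g a ^ p ∂μ = ((∫⁻ a, g a ^ p ∂μ) ^ (1 / p)) ^ p := by
        rw [← ENNReal.rpow_mul, one_div_mul_cancel hp₀.ne', ENNReal.rpow_one]
    _ ≤ (∫⁻ a, g a ∂μ) ^ p := ENNReal.rpow_le_rpow h hp₀.le

theorem ofReal_exp_integral_le_lintegral {f : α → ℝ} (hf : Integrable f μ) :
    ENNReal.ofReal (exp (∫ a, f a ∂μ)) ≤ ∫⁻ a, ENNReal.ofReal (exp (f a)) ∂μ := by
  by_cases htop : ∫⁻ a, ENNReal.ofReal (exp (f a)) ∂μ = ∞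
  · exact htop ▸ le_top
  have hexp : Integrable (fun a => exp (f a)) μ :=
    ⟨hf.aestronglyMeasurable.aemeasurable.exp.aestronglyMeasurable,
      (hasFiniteIntegral_iff_ofReal (.of_forall fun a => (exp_pos (f a)).le)).2
        (lt_top_iff_ne_top.2 htop)⟩
  rw [← ofReal_integral_eq_lintegral_ofReal hexp (.of_forall fun a => (exp_pos (f a)).le)]
  exact ENNReal.ofReal_le_ofReal (convexOn_exp.map_integral_le continuousOn_exp isClosed_univ
    (.of_forall fun _ => trivial) hf hexp)

theorem lintegral_ofReal_exp_div_two_mul_le {f : α → ℝ} (hf : AEMeasurable f μ) (c : ℝ) :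
    ∫⁻ a, ENNReal.ofReal (exp (f a / (2 * c))) ∂μ
      ≤ (∫⁻ a, ENNReal.ofReal (exp (f a / c)) ∂μ) ^ (2⁻¹ : ℝ) := by
  simp_rw [ofReal_exp_div_two_mul]
  exact lintegral_rpow_le_rpow_lintegral (by fun_prop) (by norm_num) (by norm_num)

theorem lintegral_lintegral_ofReal_le_sqrt {β : Type*} [MeasurableSpace β] {ν : Measure β}
    [IsProbabilityMeasure ν] {f : α → β → ℝ} (hf : Measurable (Function.uncurry f))
    (hf₀ : ∀ x y, 0 ≤ f x y) :
    ∫⁻ x, ∫⁻ y, ENNReal.ofReal (f x y) ∂ν ∂μ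
      ≤ (∫⁻ x, ∫⁻ y, ENNReal.ofReal (f x y ^ 2) ∂ν ∂μ) ^ (2⁻¹ : ℝ) := by
  have hsq : Measurable fun p : α × β => ENNReal.ofReal (f p.1 p.2 ^ 2) := by fun_prop
  rw [← lintegral_prod _ hsq.aemeasurable,
    ← lintegral_prod (fun p : α × β => ENNReal.ofReal (f p.1 p.2)) (by fun_prop)]
  simpa only [ofReal_sq_rpow_inv_two (hf₀ _ _)] using
    lintegral_rpow_le_rpow_lintegral hsq.aemeasurable (μ := μ.prod ν) (p := 2⁻¹) (by norm_num)
      (by norm_num)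

end Lintegral

section SymmetricKernel

variable {α : Type*} [MeasurableSpace α] {μ : Measure α} [IsProbabilityMeasure μ]
  {ρ : α → α → ℝ} {c C : ℝ}

theorem lintegral_ofReal_exp_sub_integral_div_two_mul_le (hρ : Measurable (Function.uncurry ρ))
    (hJN : ∀ x, ∫⁻ y, ENNReal.ofReal (exp ((ρ x y - ∫ y', ρ x y' ∂μ) / c)) ∂μ ≤ ENNReal.ofReal C)
    (x : α) :
    ∫⁻ y, ENNReal.ofReal (exp ((ρ x y - ∫ y', ρ x y' ∂μ) / (2 * c))) ∂μ
      ≤ ENNReal.ofReal C ^ (2⁻¹ : ℝ) :=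
  (lintegral_ofReal_exp_div_two_mul_le (by fun_prop) c).trans
    (ENNReal.rpow_le_rpow (hJN x) (by norm_num))

theorem lintegral_ofReal_exp_integral_div_two_mul_le (hρ : Measurable (Function.uncurry ρ))
    (hsymm : ∀ x y, ρ x y = ρ y x) (hint : ∀ x, Integrable (ρ x) μ)
    (hmean : Integrable (fun x => ∫ y, ρ x y ∂μ) μ)
    (hJN : ∀ x, ∫⁻ y, ENNReal.ofReal (exp ((ρ x y - ∫ y', ρ x y' ∂μ) / c)) ∂μ ≤ ENNReal.ofReal C) :
    ∫⁻ x, ENNReal.ofReal (exp ((∫ y, ρ x y ∂μ) / (2 * c))) ∂μ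
      ≤ ENNReal.ofReal (exp ((∫ x, ∫ y, ρ x y ∂μ ∂μ) / (2 * c)))
        * ENNReal.ofReal C ^ (2⁻¹ : ℝ) := by
  set r := fun x => ∫ y, ρ x y ∂μ
  set m := ∫ x, r x ∂μ
  have hjensen : ∀ x, ENNReal.ofReal (exp ((r x - m) / (2 * c)))
      ≤ ∫⁻ y, ENNReal.ofReal (exp ((ρ x y - r y) / (2 * c))) ∂μ := fun x => by
    have hmean_sub : ∫ y, (ρ x y - r y) / (2 * c) ∂μ = (r x - m) / (2 * c) := by
      rw [integral_div, integral_sub (hint x) hmean]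
    have := ofReal_exp_integral_le_lintegral (f := fun y => (ρ x y - r y) / (2 * c))
      (((hint x).sub hmean).div_const (2 * c))
    rwa [hmean_sub] at this
  have hswap : ∫⁻ x, ∫⁻ y, ENNReal.ofReal (exp ((ρ x y - r y) / (2 * c))) ∂μ ∂μ
      = ∫⁻ y, ∫⁻ x, ENNReal.ofReal (exp ((ρ y x - r y) / (2 * c))) ∂μ ∂μ := by
    have hr : Measurable r := hρ.stronglyMeasurable.integral_prod_right.measurable
    rw [lintegral_lintegral_swap (by fun_prop)]
    exact lintegral_congr fun y => lintegral_congr fun x => by rw [hsymm]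
  calc ∫⁻ x, ENNReal.ofReal (exp (r x / (2 * c))) ∂μ
      = ENNReal.ofReal (exp (m / (2 * c))) * ∫⁻ x, ENNReal.ofReal (exp ((r x - m) / (2 * c))) ∂μ :=
        lintegral_ofReal_exp_div_eq_mul r m (2 * c)
    _ ≤ ENNReal.ofReal (exp (m / (2 * c)))
          * ∫⁻ x, ∫⁻ y, ENNReal.ofReal (exp ((ρ x y - r y) / (2 * c))) ∂μ ∂μ := by
        gcongr with x
        exact hjensen x
    _ ≤ ENNReal.ofReal (exp (m / (2 * c))) * ∫⁻ _ : α, ENNReal.ofReal C ^ (2⁻¹ : ℝ) ∂μ := by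
        rw [hswap]
        gcongr with y
        exact lintegral_ofReal_exp_sub_integral_div_two_mul_le hρ hJN y
    _ = ENNReal.ofReal (exp (m / (2 * c))) * ENNReal.ofReal C ^ (2⁻¹ : ℝ) := by
        rw [lintegral_const, measure_univ, mul_one]

theorem lintegral_lintegral_ofReal_exp_div_two_mul_le (hρ : Measurable (Function.uncurry ρ))
    (hsymm : ∀ x y, ρ x y = ρ y x) (hint : ∀ x, Integrable (ρ x) μ)
    (hmean : Integrable (fun x => ∫ y, ρ x y ∂μ) μ)
    (hJN : ∀ x, ∫⁻ y, ENNReal.ofReal (exp ((ρ x y - ∫ y', ρ x y' ∂μ) / c)) ∂μ ≤ ENNReal.ofReal C) :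
    ∫⁻ x, ∫⁻ y, ENNReal.ofReal (exp (ρ x y / (2 * c))) ∂μ ∂μ
      ≤ ENNReal.ofReal C * ENNReal.ofReal (exp ((∫ x, ∫ y, ρ x y ∂μ ∂μ) / (2 * c))) := by
  set r := fun x => ∫ y, ρ x y ∂μ
  set E := ENNReal.ofReal (exp ((∫ x, r x ∂μ) / (2 * c)))
  calc ∫⁻ x, ∫⁻ y, ENNReal.ofReal (exp (ρ x y / (2 * c))) ∂μ ∂μ
      = ∫⁻ x, ENNReal.ofReal (exp (r x / (2 * c)))
          * ∫⁻ y, ENNReal.ofReal (exp ((ρ x y - r x) / (2 * c))) ∂μ ∂μ :=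
        lintegral_congr fun x => lintegral_ofReal_exp_div_eq_mul (ρ x) (r x) (2 * c)
    _ ≤ ∫⁻ x, ENNReal.ofReal (exp (r x / (2 * c))) * ENNReal.ofReal C ^ (2⁻¹ : ℝ) ∂μ := by
        gcongr with x
        exact lintegral_ofReal_exp_sub_integral_div_two_mul_le hρ hJN x
    _ = (∫⁻ x, ENNReal.ofReal (exp (r x / (2 * c))) ∂μ) * ENNReal.ofReal C ^ (2⁻¹ : ℝ) :=
        lintegral_mul_const' _ _ (ENNReal.rpow_ne_top_of_nonneg (by norm_num) ENNReal.ofReal_ne_top)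
    _ ≤ E * ENNReal.ofReal C ^ (2⁻¹ : ℝ) * ENNReal.ofReal C ^ (2⁻¹ : ℝ) := by
        gcongr
        exact lintegral_ofReal_exp_integral_div_two_mul_le hρ hsymm hint hmean hJN
    _ = ENNReal.ofReal C * E := by
        rw [mul_assoc, ← ENNReal.rpow_add_of_nonneg _ _ (by norm_num) (by norm_num), mul_comm]
        norm_num

end SymmetricKernel

theorem exp_dist_double_integral_bound_general {M : Type*} [MeasurableSpace M]
    (μ : Measure M) [IsProbabilityMeasure μ]
    (ρ : M → M → ℝ) (hmeas : Measurable (Function.uncurry ρ))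
    (hnonneg : ∀ x y, 0 ≤ ρ x y) (hsymm : ∀ x y, ρ x y = ρ y x)
    (hint : ∀ x, Integrable (ρ x) μ)
    (C₁ C₂ C₃ : ℝ) (hC₁ : 0 < C₁) (hC₃ : 0 ≤ C₃)
    (hJN : ∀ x, ∫⁻ y, ENNReal.ofReal (exp ((ρ x y - ∫ y', ρ x y' ∂μ) / C₁)) ∂μ
      ≤ ENNReal.ofReal C₂)
    (hL2 : ∫⁻ x, ∫⁻ y, ENNReal.ofReal ((ρ x y) ^ 2) ∂μ ∂μ ≤ ENNReal.ofReal (C₃ ^ 2)) :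
    ∫⁻ x, ∫⁻ y, ENNReal.ofReal (exp (ρ x y / (2 * C₁))) ∂μ ∂μ
      ≤ ENNReal.ofReal (C₂ * exp (C₃ / (2 * C₁))) := by
  have hmean_lintegral : ∫⁻ x, ENNReal.ofReal (∫ y, ρ x y ∂μ) ∂μ ≤ ENNReal.ofReal C₃ :=
    calc ∫⁻ x, ENNReal.ofReal (∫ y, ρ x y ∂μ) ∂μ = ∫⁻ x, ∫⁻ y, ENNReal.ofReal (ρ x y) ∂μ ∂μ :=
          lintegral_congr fun x =>
            ofReal_integral_eq_lintegral_ofReal (hint x) (.of_forall (hnonneg x))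
      _ ≤ (∫⁻ x, ∫⁻ y, ENNReal.ofReal ((ρ x y) ^ 2) ∂μ ∂μ) ^ (2⁻¹ : ℝ) :=
          lintegral_lintegral_ofReal_le_sqrt hmeas hnonneg
      _ ≤ ENNReal.ofReal (C₃ ^ 2) ^ (2⁻¹ : ℝ) := ENNReal.rpow_le_rpow hL2 (by norm_num)
      _ = ENNReal.ofReal C₃ := ofReal_sq_rpow_inv_two hC₃
  obtain ⟨hmean, hmean_le⟩ := integrable_and_integral_le_of_lintegral_ofReal_le
    hmeas.stronglyMeasurable.integral_prod_right.measurable.aemeasurable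
    (fun x => integral_nonneg (hnonneg x)) hC₃ hmean_lintegral
  calc ∫⁻ x, ∫⁻ y, ENNReal.ofReal (exp (ρ x y / (2 * C₁))) ∂μ ∂μ
      ≤ ENNReal.ofReal C₂ * ENNReal.ofReal (exp ((∫ x, ∫ y, ρ x y ∂μ ∂μ) / (2 * C₁))) :=
        lintegral_lintegral_ofReal_exp_div_two_mul_le hmeas hsymm hint hmean hJN
    _ ≤ ENNReal.ofReal (C₂ * exp (C₃ / (2 * C₁))) := by
        rw [ENNReal.ofReal_mul' (exp_pos _).le]
        gcongr

/-- Exponential integrability of a symmetric kernel on a probability space from a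
uniform John–Nirenberg-type bound relative to the slice means and an `L²` bound:
if `∫ exp((ρ(x,y) − ρ̄ₓ)/C₁) dμ(y) ≤ C₂` for all `x` and `∬ ρ² ≤ C₃²`, then
`∬ exp(ρ/(2C₁)) dμ dμ ≤ C₂ exp(C₃/(2C₁))`. -/
theorem exp_dist_double_integral_bound {M : Type*} [MeasurableSpace M]
    (μ : Measure M) [IsProbabilityMeasure μ]
    (ρ : M → M → ℝ) (hmeas : Measurable (Function.uncurry ρ))
    (hnonneg : ∀ x y, 0 ≤ ρ x y) (hsymm : ∀ x y, ρ x y = ρ y x)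
    (hint : ∀ x, Integrable (ρ x) μ)
    (hmean_meas : Measurable fun x => ∫ y, ρ x y ∂μ)
    (C₁ C₂ C₃ : ℝ) (hC₁ : 0 < C₁) (hC₂ : 0 < C₂) (hC₃ : 0 ≤ C₃)
    (hJN : ∀ x, ∫⁻ y, ENNReal.ofReal (exp ((ρ x y - ∫ y', ρ x y' ∂μ) / C₁)) ∂μ
      ≤ ENNReal.ofReal C₂)
    (hL2 : ∫⁻ x, ∫⁻ y, ENNReal.ofReal ((ρ x y) ^ 2) ∂μ ∂μ ≤ ENNReal.ofReal (C₃ ^ 2)) :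
    ∫⁻ x, ∫⁻ y, ENNReal.ofReal (exp (ρ x y / (2 * C₁))) ∂μ ∂μ
      ≤ ENNReal.ofReal (C₂ * exp (C₃ / (2 * C₁))) :=
  exp_dist_double_integral_bound_general μ ρ hmeas hnonneg hsymm hint C₁ C₂ C₃ hC₁ hC₃ hJN hL2
end

section
/- Let n ≥ 3 be an integer and let 0 ≤ p < n − 1 be a real number. There exists a constant C > 0 such that for every y ∈ ℂ, the integral of ‖z‖^{−2p} over the set {z ∈ ℂⁿ : z₁² + ⋯ + zₙ² = y and ‖z‖ ≤ 1}, taken with respect to the (2n−2)-dimensional Hausdorff measure on ℂⁿ ≅ ℝ^{2n}, is at most C. -/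
/-!
Split the unit-ball part of the fibre `z₁² + ⋯ + zₙ² = y` into the pieces where `zⱼ` is a
coordinate of maximal modulus and lies in a fixed quadrant. On such a piece, dropping `zⱼ`
is injective with Lipschitz inverse of constant `2n - 1`, uniformly in `y`: from
`zⱼ² - z'ⱼ² = ∑ᵢ (z'ᵢ - zᵢ)(z'ᵢ + zᵢ)` and Cauchy–Schwarz, while the quadrant condition gives
`|zⱼ + z'ⱼ|² ≥ |zⱼ|² + |z'ⱼ|²`. Hence `μH[2n-2]` of the fibre in the unit ball is bounded
independently of `y`, and since fibres are dilates of fibres, the part in the ball of radius `r`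
has measure `O(r^(2n-2))`. Summing over the dyadic shells `2^-(k+1) < ‖z‖ ≤ 2^-k` gives a
geometric series, which converges exactly when `p < n - 1`.
-/

open MeasureTheory Metric Set Module
open scoped ENNReal NNReal Pointwise ComplexConjugate

theorem hausdorffMeasure_le_mul_image_of_dist_le {X Y : Type*} [MetricSpace X] [MeasurableSpace X]
    [BorelSpace X] [MetricSpace Y] [MeasurableSpace Y] [BorelSpace Y] {f : X → Y}
    {s : Set X} {K : ℝ≥0} (hf : ∀ x ∈ s, ∀ x' ∈ s, dist x x' ≤ K * dist (f x) (f x'))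
    {d : ℝ} (hd : 0 ≤ d) : μH[d] s ≤ (K : ℝ≥0∞) ^ d * μH[d] (f '' s) := by
  rcases s.eq_empty_or_nonempty with rfl | ⟨x₀, -⟩
  · simp
  have : Nonempty X := ⟨x₀⟩
  set g := Function.invFunOn f s
  have hg : ∀ x ∈ s, g (f x) = x := by
    intro x hx
    have h := hf (g (f x)) (Function.invFunOn_apply_mem (f := f) hx) x hx
    rw [Function.invFunOn_apply_eq (f := f) hx, dist_self, mul_zero] at h
    exact dist_le_zero.1 h
  have hlip : LipschitzOnWith K g (f '' s) := by
    refine LipschitzOnWith.of_dist_le_mul ?_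
    rintro _ ⟨x, hx, rfl⟩ _ ⟨x', hx', rfl⟩
    rw [hg x hx, hg x' hx']
    exact hf x hx x' hx'
  calc μH[d] s ≤ μH[d] (g '' (f '' s)) :=
        measure_mono fun x hx => ⟨f x, mem_image_of_mem f hx, hg x hx⟩
    _ ≤ (K : ℝ≥0∞) ^ d * μH[d] (f '' s) := hlip.hausdorffMeasure_image_le hd

theorem hausdorffMeasure_finrank_lt_top_of_isBounded {V : Type*} [NormedAddCommGroup V]
    [InnerProductSpace ℝ V] [FiniteDimensional ℝ V] [MeasurableSpace V] [BorelSpace V]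
    {s : Set V} (hs : Bornology.IsBounded s) : μH[finrank ℝ V] s < ⊤ := by
  set c := (volume : Measure (EuclideanSpace ℝ (Fin (finrank ℝ V)))).addHaarScalarFactor
    μH[finrank ℝ V]
  have hvol : (c : ℝ≥0∞) * μH[finrank ℝ V] s = volume s := by
    rw [← InnerProductSpace.euclideanHausdorffMeasure_eq_volume,
      Measure.euclideanHausdorffMeasure_def]
    rfl
  refine ENNReal.lt_top_of_mul_ne_top_right (hvol ▸ hs.measure_lt_top.ne) ?_
  exact_mod_cast Measure.addHaarScalarFactor_volume_hausdorffMeasure_ne_zero _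

section DyadicShells

variable {E : Type*} [NormedAddCommGroup E]

variable (E) in
def dyadicShell (k : ℕ) : Set E :=
  {z | (2 : ℝ) ^ k ≤ ‖z‖⁻¹ ∧ ‖z‖⁻¹ < 2 ^ (k + 1)}

theorem closedBall_one_subset_insert_iUnion_dyadicShell :
    closedBall (0 : E) 1 ⊆ insert 0 (⋃ k, dyadicShell E k) := by
  intro z hz
  rcases eq_or_ne z 0 with rfl | hz0
  · exact mem_insert _ _
  have hz1 : 1 ≤ ‖z‖⁻¹ := one_le_inv₀ (norm_pos_iff.2 hz0) |>.2 (mem_closedBall_zero_iff.1 hz)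
  exact mem_insert_of_mem _ (mem_iUnion.2 (exists_nat_pow_near hz1 one_lt_two))

theorem dyadicShell_subset_closedBall (k : ℕ) :
    dyadicShell E k ⊆ closedBall 0 ((2 : ℝ) ^ k)⁻¹ := by
  rintro z ⟨hk, -⟩
  have h2k : (0 : ℝ) < 2 ^ k := by positivity
  exact mem_closedBall_zero_iff.2 <| (le_inv_comm₀ h2k (inv_pos.1 (h2k.trans_le hk))).1 hk

variable [MeasurableSpace E] {μ : Measure E} {s : Set E} {C : ℝ≥0∞} {a d : ℝ}

theorem setLIntegral_inter_dyadicShell_norm_rpow_neg_le (ha : 0 ≤ a)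
    (hs : ∀ r, 0 < r → μ (s ∩ closedBall 0 r) ≤ C * ENNReal.ofReal (r ^ d)) (k : ℕ) :
    ∫⁻ z in s ∩ dyadicShell E k, ENNReal.ofReal (‖z‖ ^ (-a)) ∂μ ≤
      C * ENNReal.ofReal (2 ^ a * ((2 : ℝ) ^ (a - d)) ^ k) := by
  have h2k : (0 : ℝ) < 2 ^ k := by positivity
  have hint : ∀ z ∈ s ∩ dyadicShell E k,
      ENNReal.ofReal (‖z‖ ^ (-a)) ≤ ENNReal.ofReal ((2 ^ (k + 1)) ^ a) := by
    rintro z ⟨-, -, hk⟩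
    rw [Real.rpow_neg (norm_nonneg z), ← Real.inv_rpow (norm_nonneg z)]
    exact ENNReal.ofReal_le_ofReal (Real.rpow_le_rpow (by positivity) hk.le ha)
  have hmeas : μ (s ∩ dyadicShell E k) ≤ C * ENNReal.ofReal (((2 : ℝ) ^ k)⁻¹ ^ d) :=
    (measure_mono (inter_subset_inter_right s (dyadicShell_subset_closedBall k))).trans
      (hs _ (inv_pos.2 h2k))
  have hpow : ((2 : ℝ) ^ (k + 1)) ^ a * ((2 : ℝ) ^ k)⁻¹ ^ d = 2 ^ a * (2 ^ (a - d)) ^ k := by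
    have h : ((2 : ℝ) ^ k) ^ a * ((2 : ℝ) ^ k) ^ (-d) = (2 ^ (a - d)) ^ k := by
      rw [← Real.rpow_add h2k, ← sub_eq_add_neg, Real.rpow_pow_comm zero_le_two]
    rw [pow_succ, Real.mul_rpow h2k.le zero_le_two, Real.inv_rpow h2k.le, ← Real.rpow_neg h2k.le,
      ← h]
    ring
  calc ∫⁻ z in s ∩ dyadicShell E k, ENNReal.ofReal (‖z‖ ^ (-a)) ∂μ
      ≤ ∫⁻ _ in s ∩ dyadicShell E k, ENNReal.ofReal ((2 ^ (k + 1)) ^ a) ∂μ :=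
        setLIntegral_mono measurable_const hint
    _ = ENNReal.ofReal ((2 ^ (k + 1)) ^ a) * μ (s ∩ dyadicShell E k) := setLIntegral_const _ _
    _ ≤ ENNReal.ofReal ((2 ^ (k + 1)) ^ a) * (C * ENNReal.ofReal (((2 : ℝ) ^ k)⁻¹ ^ d)) :=
        mul_le_mul_right hmeas _
    _ = C * ENNReal.ofReal (2 ^ a * (2 ^ (a - d)) ^ k) := by
        rw [mul_left_comm, ← ENNReal.ofReal_mul (by positivity), hpow]

theorem setLIntegral_inter_closedBall_norm_rpow_neg_le [NullSingletonClass μ] (ha : 0 ≤ a)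
    (had : a < d)
    (hs : ∀ r, 0 < r → μ (s ∩ closedBall 0 r) ≤ C * ENNReal.ofReal (r ^ d)) :
    ∫⁻ z in s ∩ closedBall 0 1, ENNReal.ofReal (‖z‖ ^ (-a)) ∂μ ≤
      C * ENNReal.ofReal (2 ^ a / (1 - 2 ^ (a - d))) := by
  set q : ℝ := 2 ^ (a - d)
  have hq0 : 0 ≤ q := by positivity
  have hq1 : q < 1 := Real.rpow_lt_one_of_one_lt_of_neg one_lt_two (by linarith)
  have hsum : ∑' k : ℕ, ENNReal.ofReal (2 ^ a * q ^ k) = ENNReal.ofReal (2 ^ a / (1 - q)) := by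
    rw [← ENNReal.ofReal_tsum_of_nonneg (fun k => by positivity)
      ((summable_geometric_of_lt_one hq0 hq1).mul_left _), tsum_mul_left,
      tsum_geometric_of_lt_one hq0 hq1, div_eq_mul_inv]
  have hcover : s ∩ closedBall 0 1 ⊆ insert 0 (⋃ k, s ∩ dyadicShell E k) := by
    rintro z ⟨hzs, hz⟩
    rcases closedBall_one_subset_insert_iUnion_dyadicShell hz with rfl | hz
    · exact mem_insert _ _
    · exact mem_insert_of_mem _ (by rw [← inter_iUnion]; exact ⟨hzs, hz⟩)
  calc ∫⁻ z in s ∩ closedBall 0 1, ENNReal.ofReal (‖z‖ ^ (-a)) ∂μ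
      ≤ ∫⁻ z in ⋃ k, s ∩ dyadicShell E k, ENNReal.ofReal (‖z‖ ^ (-a)) ∂μ :=
        (lintegral_mono_set hcover).trans_eq (setLIntegral_congr (insert_ae_eq_self 0 _))
    _ ≤ ∑' k, C * ENNReal.ofReal (2 ^ a * q ^ k) :=
        (lintegral_iUnion_le _ _).trans
          (ENNReal.tsum_le_tsum (setLIntegral_inter_dyadicShell_norm_rpow_neg_le ha hs))
    _ = C * ENNReal.ofReal (2 ^ a / (1 - q)) := by rw [ENNReal.tsum_mul_left, hsum]

end DyadicShells

theorem finrank_real_euclideanSpace_complex (ι : Type*) [Fintype ι] :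
    finrank ℝ (EuclideanSpace ℂ ι) = 2 * Fintype.card ι := by
  rw [← Module.finrank_mul_finrank ℝ ℂ, Complex.finrank_real_complex, finrank_euclideanSpace]

theorem EuclideanSpace.sq_norm_le_card_mul {𝕜 ι : Type*} [RCLike 𝕜] [Fintype ι]
    {u : EuclideanSpace 𝕜 ι} {r : ℝ} (h : ∀ i, ‖u i‖ ≤ r) :
    ‖u‖ ^ 2 ≤ Fintype.card ι * r ^ 2 := by
  rw [EuclideanSpace.norm_sq_eq]
  calc ∑ i, ‖u i‖ ^ 2 ≤ ∑ _i : ι, r ^ 2 :=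
        Finset.sum_le_sum fun i _ => pow_le_pow_left₀ (norm_nonneg _) (h i) 2
    _ = Fintype.card ι * r ^ 2 := by simp

theorem EuclideanSpace.norm_sum_mul_le {ι : Type*} [Fintype ι] (a b : EuclideanSpace ℂ ι) :
    ‖∑ i, a i * b i‖ ≤ ‖a‖ * ‖b‖ := by
  calc ‖∑ i, a i * b i‖ ≤ ∑ i, ‖a i‖ * ‖b i‖ :=
        (norm_sum_le _ _).trans_eq (by simp_rw [norm_mul])
    _ ≤ √(∑ i, ‖a i‖ ^ 2) * √(∑ i, ‖b i‖ ^ 2) := Real.sum_mul_le_sqrt_mul_sqrt _ _ _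
    _ = ‖a‖ * ‖b‖ := by rw [EuclideanSpace.norm_eq, EuclideanSpace.norm_eq]

noncomputable def quadrant (w : ℂ) : Bool × Bool := (decide (0 ≤ w.re), decide (0 ≤ w.im))

theorem re_mul_conj_nonneg_of_quadrant_eq {w w' : ℂ} (h : quadrant w = quadrant w') :
    0 ≤ (w * conj w').re := by
  have same_sign : ∀ a b : ℝ, decide (0 ≤ a) = decide (0 ≤ b) → 0 ≤ a * b := by
    intro a b hab
    rcases le_or_gt 0 a with ha | ha
    · exact mul_nonneg ha (by simpa [ha] using hab)
    · exact mul_nonneg_of_nonpos_of_nonpos ha.le (by simp [ha.not_ge] at hab; exact hab.le)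
  simp only [quadrant, Prod.mk.injEq] at h
  simpa using add_nonneg (same_sign _ _ h.1) (same_sign _ _ h.2)

theorem sq_norm_add_sq_norm_le_sq_norm_add {w w' : ℂ} (h : 0 ≤ (w * conj w').re) :
    ‖w‖ ^ 2 + ‖w'‖ ^ 2 ≤ ‖w + w'‖ ^ 2 := by
  simp only [Complex.sq_norm, Complex.normSq_add]
  linarith

theorem sq_norm_sub_le_of_sq_add_sum_sq_eq {ι : Type*} [Fintype ι] {w w' : ℂ}
    {u u' : EuclideanSpace ℂ ι} (hsum : w ^ 2 + ∑ i, u i ^ 2 = w' ^ 2 + ∑ i, u' i ^ 2)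
    (hww' : 0 ≤ (w * conj w').re) (hu : ∀ i, ‖u i‖ ≤ ‖w‖) (hu' : ∀ i, ‖u' i‖ ≤ ‖w'‖) :
    ‖w - w'‖ ^ 2 ≤ 2 * Fintype.card ι * ‖u - u'‖ ^ 2 := by
  have hfactor : (w - w') * (w + w') = ∑ i, (u' - u) i * (u' + u) i := by
    have : ∑ i, (u' - u) i * (u' + u) i = ∑ i, u' i ^ 2 - ∑ i, u i ^ 2 := by
      rw [← Finset.sum_sub_distrib]
      exact Finset.sum_congr rfl fun i _ => by simp only [PiLp.sub_apply, PiLp.add_apply]; ring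
    rw [this]
    linear_combination hsum
  have hcs : ‖w - w'‖ * ‖w + w'‖ ≤ ‖u - u'‖ * ‖u + u'‖ := by
    rw [← norm_mul, hfactor, ← norm_neg (u - u'), neg_sub, add_comm u]
    exact EuclideanSpace.norm_sum_mul_le _ _
  have hadd : ‖u + u'‖ ^ 2 ≤ 2 * (‖u‖ ^ 2 + ‖u'‖ ^ 2) := by
    nlinarith [parallelogram_law_with_norm ℝ u u', sq_nonneg ‖u - u'‖]
  have hu_sq := EuclideanSpace.sq_norm_le_card_mul hu
  have hu'_sq := EuclideanSpace.sq_norm_le_card_mul hu'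
  have hw := sq_norm_add_sq_norm_le_sq_norm_add hww'
  set e := ‖w‖ ^ 2 + ‖w'‖ ^ 2
  rcases (show 0 ≤ e by positivity).eq_or_lt with he | he
  · have hw0 : w = 0 := by rw [← norm_eq_zero]; nlinarith [norm_nonneg w, norm_nonneg w']
    have hw'0 : w' = 0 := by rw [← norm_eq_zero]; nlinarith [norm_nonneg w, norm_nonneg w']
    rw [hw0, hw'0, sub_zero, norm_zero, sq, zero_mul]
    positivity
  refine le_of_mul_le_mul_right ?_ he
  calc ‖w - w'‖ ^ 2 * e ≤ (‖w - w'‖ * ‖w + w'‖) ^ 2 := by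
        rw [mul_pow]; exact mul_le_mul_of_nonneg_left hw (by positivity)
    _ ≤ (‖u - u'‖ * ‖u + u'‖) ^ 2 := pow_le_pow_left₀ (by positivity) hcs 2
    _ ≤ ‖u - u'‖ ^ 2 * (2 * (Fintype.card ι * e)) := by
        rw [mul_pow]
        exact mul_le_mul_of_nonneg_left (hadd.trans (by linarith)) (by positivity)
    _ = 2 * Fintype.card ι * ‖u - u'‖ ^ 2 * e := by ring

section RemoveCoord

variable {m : ℕ} (j : Fin (m + 1))

def removeCoord (z : EuclideanSpace ℂ (Fin (m + 1))) : EuclideanSpace ℂ (Fin m) :=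
  WithLp.toLp 2 fun i => z (j.succAbove i)

theorem removeCoord_apply (z : EuclideanSpace ℂ (Fin (m + 1))) (i : Fin m) :
    removeCoord j z i = z (j.succAbove i) := rfl

theorem removeCoord_sub (z z' : EuclideanSpace ℂ (Fin (m + 1))) :
    removeCoord j (z - z') = removeCoord j z - removeCoord j z' := rfl

theorem sq_norm_eq_sq_norm_apply_add_sq_norm_removeCoord (z : EuclideanSpace ℂ (Fin (m + 1))) :
    ‖z‖ ^ 2 = ‖z j‖ ^ 2 + ‖removeCoord j z‖ ^ 2 := by
  simp only [EuclideanSpace.norm_sq_eq, Fin.sum_univ_succAbove _ j, removeCoord_apply]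

theorem norm_removeCoord_le (z : EuclideanSpace ℂ (Fin (m + 1))) : ‖removeCoord j z‖ ≤ ‖z‖ := by
  refine pow_le_pow_iff_left₀ (norm_nonneg _) (norm_nonneg _) two_ne_zero |>.1 ?_
  rw [sq_norm_eq_sq_norm_apply_add_sq_norm_removeCoord j z]
  exact le_add_of_nonneg_left (sq_nonneg _)

theorem dist_le_mul_dist_removeCoord {z z' : EuclideanSpace ℂ (Fin (m + 1))}
    (hsum : ∑ i, z i ^ 2 = ∑ i, z' i ^ 2) (hquad : quadrant (z j) = quadrant (z' j))
    (hz : ∀ i, ‖z i‖ ≤ ‖z j‖) (hz' : ∀ i, ‖z' i‖ ≤ ‖z' j‖) :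
    dist z z' ≤ (2 * m + 1) * dist (removeCoord j z) (removeCoord j z') := by
  have hw := sq_norm_sub_le_of_sq_add_sum_sq_eq (u := removeCoord j z) (u' := removeCoord j z')
    (by simpa only [Fin.sum_univ_succAbove _ j, removeCoord_apply] using hsum)
    (re_mul_conj_nonneg_of_quadrant_eq hquad) (fun i => hz _) (fun i => hz' _)
  rw [Fintype.card_fin] at hw
  have hsq : dist z z' ^ 2 ≤ ((2 * m + 1) * dist (removeCoord j z) (removeCoord j z')) ^ 2 := by
    rw [dist_eq_norm, dist_eq_norm, sq_norm_eq_sq_norm_apply_add_sq_norm_removeCoord j,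
      removeCoord_sub]
    simp only [PiLp.sub_apply] at hw ⊢
    nlinarith [sq_nonneg ‖removeCoord j z - removeCoord j z'‖, (m.cast_nonneg : (0 : ℝ) ≤ m)]
  exact pow_le_pow_iff_left₀ dist_nonneg (by positivity) two_ne_zero |>.1 hsq

end RemoveCoord

theorem exists_hausdorffMeasure_fibre_inter_closedBall_one_le (m : ℕ)
    [MeasurableSpace (EuclideanSpace ℂ (Fin (m + 1)))]
    [BorelSpace (EuclideanSpace ℂ (Fin (m + 1)))] :
    ∃ C : ℝ≥0∞, C ≠ ⊤ ∧ ∀ y : ℂ,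
      μH[2 * (m : ℝ)] ({z : EuclideanSpace ℂ (Fin (m + 1)) | ∑ i, z i ^ 2 = y} ∩
        closedBall 0 1) ≤ C := by
  set V := μH[2 * (m : ℝ)] (closedBall (0 : EuclideanSpace ℂ (Fin m)) 1)
  have hV : V ≠ ⊤ := by
    have := hausdorffMeasure_finrank_lt_top_of_isBounded
      (isBounded_closedBall (x := (0 : EuclideanSpace ℂ (Fin m))) (r := 1))
    rw [finrank_real_euclideanSpace_complex, Fintype.card_fin, Nat.cast_mul, Nat.cast_two] at this
    exact this.ne
  set B := ((2 * m + 1 : ℝ≥0) : ℝ≥0∞) ^ (2 * (m : ℝ)) * V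
  have hB : B ≠ ⊤ :=
    ENNReal.mul_ne_top (ENNReal.rpow_ne_top_of_nonneg (by positivity) ENNReal.coe_ne_top) hV
  refine ⟨∑ _q : Fin (m + 1) × Bool × Bool, B, ENNReal.sum_ne_top.2 fun _ _ => hB, fun y => ?_⟩
  set S := {z : EuclideanSpace ℂ (Fin (m + 1)) | ∑ i, z i ^ 2 = y} ∩ closedBall 0 1
  set piece : Fin (m + 1) × Bool × Bool → Set (EuclideanSpace ℂ (Fin (m + 1))) :=
    fun q => {z ∈ S | (∀ i, ‖z i‖ ≤ ‖z q.1‖) ∧ quadrant (z q.1) = q.2}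
  have hcover : S ⊆ ⋃ q, piece q := fun z hz => by
    obtain ⟨j, hj⟩ := Finite.exists_max fun i => ‖z i‖
    exact mem_iUnion.2 ⟨(j, quadrant (z j)), hz, hj, rfl⟩
  have hpiece : ∀ q, μH[2 * (m : ℝ)] (piece q) ≤ B := by
    rintro ⟨j, b⟩
    refine (hausdorffMeasure_le_mul_image_of_dist_le (f := removeCoord j) ?_
      (by positivity)).trans (mul_le_mul_right (measure_mono ?_) _)
    · rintro z ⟨⟨hz, -⟩, hdom, hq⟩ z' ⟨⟨hz', -⟩, hdom', hq'⟩
      exact_mod_cast dist_le_mul_dist_removeCoord j (hz.trans hz'.symm) (hq.trans hq'.symm)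
        hdom hdom'
    · rintro _ ⟨z, ⟨⟨-, hz⟩, -⟩, rfl⟩
      rw [mem_closedBall_zero_iff] at hz ⊢
      exact (norm_removeCoord_le j z).trans hz
  calc μH[2 * (m : ℝ)] S ≤ ∑ q, μH[2 * (m : ℝ)] (piece q) :=
        (measure_mono hcover).trans (measure_iUnion_fintype_le _ _)
    _ ≤ ∑ _q : Fin (m + 1) × Bool × Bool, B := Finset.sum_le_sum fun q _ => hpiece q

theorem fibre_inter_closedBall_eq_smul {ι : Type*} [Fintype ι] (y : ℂ) {r : ℝ} (hr : 0 < r) :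
    {z : EuclideanSpace ℂ ι | ∑ i, z i ^ 2 = y} ∩ closedBall 0 r =
      r • ({z | ∑ i, z i ^ 2 = y / (r : ℂ) ^ 2} ∩ closedBall 0 1) := by
  ext z
  have hr' : (r : ℂ) ≠ 0 := Complex.ofReal_ne_zero.2 hr.ne'
  have hsum : ∑ i, (r⁻¹ • z) i ^ 2 = (∑ i, z i ^ 2) / (r : ℂ) ^ 2 := by
    simp only [PiLp.smul_apply, Complex.real_smul, Complex.ofReal_inv, mul_pow, ← Finset.mul_sum]
    field_simp
  rw [mem_smul_set_iff_inv_smul_mem₀ hr.ne', mem_inter_iff, mem_inter_iff, mem_ofPred_eq,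
    mem_ofPred_eq, hsum, div_left_inj' (pow_ne_zero 2 hr'), mem_closedBall_zero_iff,
    mem_closedBall_zero_iff, norm_smul, Real.norm_eq_abs, abs_inv, abs_of_pos hr,
    inv_mul_le_one₀ hr]

theorem hausdorffMeasure_fibre_inter_closedBall_le {ι : Type*} [Fintype ι]
    [MeasurableSpace (EuclideanSpace ℂ ι)] [BorelSpace (EuclideanSpace ℂ ι)] {d : ℝ}
    (hd : 0 ≤ d) {C : ℝ≥0∞}
    (hC : ∀ y, μH[d] ({z : EuclideanSpace ℂ ι | ∑ i, z i ^ 2 = y} ∩ closedBall 0 1) ≤ C)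
    (y : ℂ) {r : ℝ} (hr : 0 < r) :
    μH[d] ({z : EuclideanSpace ℂ ι | ∑ i, z i ^ 2 = y} ∩ closedBall 0 r) ≤
      C * ENNReal.ofReal (r ^ d) := by
  rw [fibre_inter_closedBall_eq_smul y hr, Measure.hausdorffMeasure_smul₀ hd hr.ne',
    ENNReal.smul_def, smul_eq_mul, ENNReal.coe_rpow_of_nonneg _ hd, ← enorm_eq_nnnorm,
    Real.enorm_eq_ofReal hr.le, ENNReal.ofReal_rpow_of_pos hr, mul_comm C]
  exact mul_le_mul_right (hC _) _

theorem odp_fibre_integral_uniformly_bounded_general (n : ℕ)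
    [MeasurableSpace (EuclideanSpace ℂ (Fin n))]
    [BorelSpace (EuclideanSpace ℂ (Fin n))]
    (p : ℝ) (hp0 : 0 ≤ p) (hp : p < (n : ℝ) - 1) :
    ∃ C : ℝ, 0 < C ∧ ∀ y : ℂ,
      ∫⁻ z in {z : EuclideanSpace ℂ (Fin n) | (∑ i, z i ^ 2) = y ∧ ‖z‖ ≤ 1},
        ENNReal.ofReal (‖z‖ ^ (-(2 * p))) ∂(μH[2 * (n : ℝ) - 2])
      ≤ ENNReal.ofReal C := by
  obtain ⟨m, rfl⟩ : ∃ m, n = m + 1 :=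
    Nat.exists_eq_add_one.2 (by exact_mod_cast (by linarith : (0 : ℝ) < n))
  have hdim : 2 * ((m + 1 : ℕ) : ℝ) - 2 = 2 * m := by push_cast; ring
  have hpm : 2 * p < 2 * m := by push_cast at hp; linarith
  have : NullSingletonClass (μH[2 * (m : ℝ)] : Measure (EuclideanSpace ℂ (Fin (m + 1)))) :=
    Measure.nullSingletonClass_hausdorff _ (by linarith)
  obtain ⟨C₀, hC₀, hball⟩ := exists_hausdorffMeasure_fibre_inter_closedBall_one_le m
  set B := C₀ * ENNReal.ofReal (2 ^ (2 * p) / (1 - 2 ^ (2 * p - 2 * m)))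
  have hB : B ≠ ⊤ := ENNReal.mul_ne_top hC₀ ENNReal.ofReal_ne_top
  refine ⟨B.toReal + 1, by positivity, fun y => ?_⟩
  have hset : {z : EuclideanSpace ℂ (Fin (m + 1)) | (∑ i, z i ^ 2) = y ∧ ‖z‖ ≤ 1} =
      {z | ∑ i, z i ^ 2 = y} ∩ closedBall 0 1 := by
    ext z
    simp
  rw [hset, hdim]
  calc _ ≤ B := setLIntegral_inter_closedBall_norm_rpow_neg_le (by positivity) hpm fun r hr =>
        hausdorffMeasure_fibre_inter_closedBall_le (by positivity) hball y hr
    _ ≤ ENNReal.ofReal (B.toReal + 1) := by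
        rw [ENNReal.ofReal_add ENNReal.toReal_nonneg zero_le_one, ENNReal.ofReal_toReal hB]
        exact le_self_add

/-- For a Lefschetz (ordinary double point) local model in dimension `n ≥ 3` and any
exponent `0 ≤ p < n − 1`, the integral of `‖z‖^(−2p)` over the unit-ball part of the
fibre `{z : z₁² + ⋯ + zₙ² = y}`, with respect to the `(2n−2)`-dimensional Hausdorff
measure, is bounded uniformly in `y ∈ ℂ`. -/
theorem odp_fibre_integral_uniformly_bounded (n : ℕ)
    [MeasurableSpace (EuclideanSpace ℂ (Fin n))]
    [BorelSpace (EuclideanSpace ℂ (Fin n))]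
    (hn : 3 ≤ n) (p : ℝ) (hp0 : 0 ≤ p) (hp : p < (n : ℝ) - 1) :
    ∃ C : ℝ, 0 < C ∧ ∀ y : ℂ,
      ∫⁻ z in {z : EuclideanSpace ℂ (Fin n) | (∑ i, z i ^ 2) = y ∧ ‖z‖ ≤ 1},
        ENNReal.ofReal (‖z‖ ^ (-(2 * p))) ∂(μH[2 * (n : ℝ) - 2])
      ≤ ENNReal.ofReal C :=
  odp_fibre_integral_uniformly_bounded_general n p hp0 hp
end

section
/- There exist constants c > 0 and C > 0 such that for every y ∈ ℂ with 0 < |y| ≤ 1/2, the integral of ‖z‖^{−2} over the set {z ∈ ℂ² : z₁² + z₂² = y and ‖z‖ ≤ 1}, taken with respect to the 2-dimensional Hausdorff measure on ℂ² ≅ ℝ⁴, satisfies c·log(1/|y|) ≤ integral ≤ C·(1 + log(1/|y|)). -/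
/-!
On the fibre `z₀² + z₁² = y`, `y ≠ 0`, the null coordinate `u = z₀ + i z₁` is a global coordinate:
`z₀ - i z₁ = y / u` and `‖z‖² = (|u|² + |y|²/|u|²) / 2`. Cut the fibre along the dyadic annuli
`a < |u| ≤ 2a`. On such a piece `z ↦ u` is `2`-Lipschitz and its inverse `(1 + |y|/a²)`-Lipschitz,
so the area of the piece is comparable to `a²` (at most `12π (a² + |y|)²/a²`), while
`‖z‖⁻² ≤ 8a²/(4a⁴ + |y|²)`; every piece therefore contributes at most `192π`. The part of the fibre
in the unit ball is covered by `O(log (1/|y|))` pieces. Conversely, for `|y|/2 ≤ a² ≤ 1/4` the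
whole piece lies in the unit ball, where `‖z‖² ≤ 4a²`, so it contributes at least `3π/16`, and
there are `≳ log (1/|y|)` disjoint such pieces.
-/

open MeasureTheory
open scoped MeasureTheory ENNReal

noncomputable section

open Metric Set Real
open scoped NNReal Function

namespace OrdinaryDoublePoint

/-- The point of `ℂ²` with null coordinates `z₀ + i z₁ = v` and `z₀ - i z₁ = w`. -/
def ofNullCoords (v w : ℂ) : EuclideanSpace ℂ (Fin 2) :=
  !₂[(v + w) / 2, (v - w) / (2 * Complex.I)]

def nullCoord (z : EuclideanSpace ℂ (Fin 2)) : ℂ := z 0 + Complex.I * z 1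

@[simp] lemma ofNullCoords_apply_zero (v w : ℂ) : ofNullCoords v w 0 = (v + w) / 2 := rfl

@[simp] lemma ofNullCoords_apply_one (v w : ℂ) :
    ofNullCoords v w 1 = (v - w) / (2 * Complex.I) := rfl

lemma nullCoord_ofNullCoords (v w : ℂ) : nullCoord (ofNullCoords v w) = v := by
  simp only [nullCoord, ofNullCoords_apply_zero, ofNullCoords_apply_one]
  field_simp
  ring

lemma ofNullCoords_sq_add_sq (v w : ℂ) :
    ofNullCoords v w 0 ^ 2 + ofNullCoords v w 1 ^ 2 = v * w := by
  simp only [ofNullCoords_apply_zero, ofNullCoords_apply_one, div_pow, mul_pow, Complex.I_sq]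
  ring

lemma ofNullCoords_nullCoord (z : EuclideanSpace ℂ (Fin 2)) :
    ofNullCoords (nullCoord z) (z 0 - Complex.I * z 1) = z := by
  ext i
  fin_cases i
  · simp [nullCoord]
  · simp only [nullCoord, Fin.isValue, Fin.mk_one, ofNullCoords_apply_one, add_sub_sub_cancel]
    field_simp
    ring

lemma nullCoord_mul (z : EuclideanSpace ℂ (Fin 2)) :
    nullCoord z * (z 0 - Complex.I * z 1) = z 0 ^ 2 + z 1 ^ 2 := by
  rw [nullCoord]
  linear_combination (-z 1 ^ 2) * Complex.I_sq

lemma ofNullCoords_sub (v w v' w' : ℂ) :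
    ofNullCoords v w - ofNullCoords v' w' = ofNullCoords (v - v') (w - w') := by
  ext i
  fin_cases i <;>
    simp only [Fin.isValue, Fin.zero_eta, Fin.mk_one, PiLp.sub_apply, ofNullCoords_apply_zero,
      ofNullCoords_apply_one] <;>
    ring

lemma norm_ofNullCoords_sq (v w : ℂ) :
    ‖ofNullCoords v w‖ ^ 2 = (‖v‖ ^ 2 + ‖w‖ ^ 2) / 2 := by
  rw [EuclideanSpace.norm_sq_eq, Fin.sum_univ_two, ofNullCoords_apply_zero,
    ofNullCoords_apply_one, norm_div, norm_div, norm_mul]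
  simp only [Complex.norm_two, Complex.norm_I, mul_one, div_pow, Complex.sq_norm,
    Complex.normSq_apply, Complex.add_re, Complex.add_im, Complex.sub_re, Complex.sub_im]
  ring

lemma norm_ofNullCoords_le (v w : ℂ) : ‖ofNullCoords v w‖ ≤ ‖v‖ + ‖w‖ := by
  rw [← pow_le_pow_iff_left₀ (norm_nonneg _) (by positivity) two_ne_zero,
    norm_ofNullCoords_sq]
  nlinarith [sq_nonneg (‖v‖ - ‖w‖), norm_nonneg v, norm_nonneg w]

lemma lipschitzWith_nullCoord : LipschitzWith 2 nullCoord := by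
  refine LipschitzWith.of_dist_le_mul fun z w => ?_
  have h : nullCoord z - nullCoord w = (z - w) 0 + Complex.I * (z - w) 1 := by
    simp only [nullCoord, PiLp.sub_apply]; ring
  rw [dist_eq_norm, dist_eq_norm, h]
  calc ‖(z - w) 0 + Complex.I * (z - w) 1‖ ≤ ‖(z - w) 0‖ + ‖(z - w) 1‖ := by
        simpa using norm_add_le ((z - w) 0) (Complex.I * (z - w) 1)
    _ ≤ ‖z - w‖ + ‖z - w‖ := add_le_add (PiLp.norm_apply_le _ 0) (PiLp.norm_apply_le _ 1)
    _ = (2 : ℝ≥0) * ‖z - w‖ := by push_cast; ring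

def fibreParam (y u : ℂ) : EuclideanSpace ℂ (Fin 2) := ofNullCoords u (y / u)

lemma fibreParam_sq_add_sq (y : ℂ) {u : ℂ} (hu : u ≠ 0) :
    fibreParam y u 0 ^ 2 + fibreParam y u 1 ^ 2 = y := by
  rw [fibreParam, ofNullCoords_sq_add_sq, mul_div_cancel₀ _ hu]

lemma nullCoord_fibreParam (y u : ℂ) : nullCoord (fibreParam y u) = u :=
  nullCoord_ofNullCoords _ _

lemma norm_fibreParam_sq (y u : ℂ) :
    ‖fibreParam y u‖ ^ 2 = (‖u‖ ^ 2 + ‖y‖ ^ 2 / ‖u‖ ^ 2) / 2 := by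
  rw [fibreParam, norm_ofNullCoords_sq, norm_div, div_pow]

lemma fibreParam_nullCoord {y : ℂ} (hy : y ≠ 0) {z : EuclideanSpace ℂ (Fin 2)}
    (hz : z 0 ^ 2 + z 1 ^ 2 = y) : nullCoord z ≠ 0 ∧ fibreParam y (nullCoord z) = z := by
  have hmul := nullCoord_mul z
  rw [hz] at hmul
  have hu : nullCoord z ≠ 0 := left_ne_zero_of_mul (hmul ▸ hy)
  refine ⟨hu, ?_⟩
  rw [fibreParam, ← hmul, mul_div_cancel_left₀ _ hu, ofNullCoords_nullCoord]

lemma lipschitzOnWith_fibreParam (y : ℂ) {a : ℝ} (ha : 0 < a) :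
    LipschitzOnWith (1 + ‖y‖ / a ^ 2).toNNReal (fibreParam y) {u | a ≤ ‖u‖} := by
  refine LipschitzOnWith.of_dist_le_mul fun u hu u' hu' => ?_
  have hu0 : 0 < ‖u‖ := ha.trans_le hu
  have hu0' : 0 < ‖u'‖ := ha.trans_le hu'
  have hinv : ‖y / u - y / u'‖ ≤ ‖y‖ / a ^ 2 * ‖u - u'‖ := by
    have h : y / u - y / u' = y * (u' - u) / (u * u') := by
      field_simp [norm_pos_iff.mp hu0, norm_pos_iff.mp hu0']
    rw [h, norm_div, norm_mul, norm_mul, norm_sub_rev, div_mul_eq_mul_div,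
      div_le_div_iff₀ (by positivity) (by positivity)]
    have : a ^ 2 ≤ ‖u‖ * ‖u'‖ := by rw [sq]; exact mul_le_mul hu hu' ha.le hu0.le
    gcongr
  rw [dist_eq_norm, dist_eq_norm, fibreParam, fibreParam, ofNullCoords_sub,
    Real.coe_toNNReal _ (by positivity)]
  calc ‖ofNullCoords (u - u') (y / u - y / u')‖ ≤ ‖u - u'‖ + ‖y / u - y / u'‖ :=
        norm_ofNullCoords_le _ _
    _ ≤ (1 + ‖y‖ / a ^ 2) * ‖u - u'‖ := by linarith

lemma hausdorffMeasure_image_measurableEquivPi (s : Set ℂ) :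
    μH[2] (Complex.measurableEquivPi '' s) = volume s := by
  have h : (μH[2] : Measure (Fin 2 → ℝ)) = volume := by
    simpa using hausdorffMeasure_pi_real (ι := Fin 2)
  rw [h, Complex.measurableEquivPi.image_eq_preimage_symm,
    Complex.volume_preserving_equiv_pi.symm.measure_preimage_equiv]

lemma volume_le_hausdorffMeasure_two (s : Set ℂ) : volume s ≤ μH[2] s := by
  have h1 : LipschitzWith 1 Complex.measurableEquivPi := by
    refine LipschitzWith.of_dist_le_mul fun z w => (dist_pi_le_iff (by positivity)).2 ?_
    intro i
    fin_cases i
    · simpa [Real.dist_eq, Complex.dist_eq] using Complex.abs_re_le_norm (z - w)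
    · simpa [Real.dist_eq, Complex.dist_eq] using Complex.abs_im_le_norm (z - w)
  calc volume s = μH[2] (Complex.measurableEquivPi '' s) :=
        (hausdorffMeasure_image_measurableEquivPi s).symm
    _ ≤ μH[2] s := by simpa using h1.hausdorffMeasure_image_le zero_le_two s

lemma hausdorffMeasure_two_le (s : Set ℂ) : μH[2] s ≤ 4 * volume s := by
  have h2 : LipschitzWith 2 Complex.measurableEquivPi.symm := by
    refine LipschitzWith.of_dist_le_mul fun p q => ?_
    rw [Complex.measurableEquivPi_symm_apply, Complex.measurableEquivPi_symm_apply,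
      Complex.dist_eq]
    have h0 : |p 0 - q 0| ≤ dist p q := by simpa [Real.dist_eq] using dist_le_pi_dist p q 0
    have h1 : |p 1 - q 1| ≤ dist p q := by simpa [Real.dist_eq] using dist_le_pi_dist p q 1
    calc ‖(p 0 : ℂ) + p 1 * Complex.I - (q 0 + q 1 * Complex.I)‖
        = ‖((p 0 - q 0 : ℝ) : ℂ) + ((p 1 - q 1 : ℝ) : ℂ) * Complex.I‖ := by push_cast; ring_nf
      _ ≤ |p 0 - q 0| + |p 1 - q 1| := by
        refine (norm_add_le _ _).trans_eq ?_
        simp [-Complex.ofReal_sub]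
      _ ≤ (2 : ℝ≥0) * dist p q := by push_cast; linarith
  calc μH[2] s = μH[2] (Complex.measurableEquivPi.symm '' (Complex.measurableEquivPi '' s)) := by
        rw [image_image]; simp
    _ ≤ (2 : ℝ≥0∞) ^ (2 : ℝ) * μH[2] (Complex.measurableEquivPi '' s) := by
        simpa using h2.hausdorffMeasure_image_le zero_le_two _
    _ = 4 * volume s := by
        rw [hausdorffMeasure_image_measurableEquivPi, ENNReal.rpow_two]; norm_num

def annulus (a b : ℝ) : Set ℂ := {u | a < ‖u‖ ∧ ‖u‖ ≤ b}

lemma annulus_eq_diff (a b : ℝ) : annulus a b = closedBall 0 b \ closedBall 0 a := by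
  ext u
  simp [annulus, and_comm]

lemma volume_annulus_two_mul {a : ℝ} (ha : 0 ≤ a) :
    volume (annulus a (2 * a)) = ENNReal.ofReal (3 * π * a ^ 2) := by
  rw [annulus_eq_diff, measure_sdiff (closedBall_subset_closedBall (by linarith))
    measurableSet_closedBall.nullMeasurableSet measure_closedBall_lt_top.ne,
    Complex.volume_closedBall, Complex.volume_closedBall, ← ENNReal.sub_mul (by simp),
    ← ENNReal.ofReal_pow ha, ← ENNReal.ofReal_pow (by positivity),
    ← ENNReal.ofReal_sub _ (by positivity), ← ENNReal.ofReal_coe_nnreal, NNReal.coe_real_pi,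
    ← ENNReal.ofReal_mul (by nlinarith)]
  ring_nf

def localFibre (y : ℂ) : Set (EuclideanSpace ℂ (Fin 2)) :=
  {z | z 0 ^ 2 + z 1 ^ 2 = y ∧ ‖z‖ ≤ 1}

def fibrePiece (y : ℂ) (a : ℝ) : Set (EuclideanSpace ℂ (Fin 2)) :=
  localFibre y ∩ nullCoord ⁻¹' annulus a (2 * a)

lemma fibrePiece_subset_image {y : ℂ} (hy : y ≠ 0) (a : ℝ) :
    fibrePiece y a ⊆ fibreParam y '' annulus a (2 * a) := by
  rintro z ⟨⟨hz, -⟩, hann⟩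
  exact ⟨nullCoord z, hann, (fibreParam_nullCoord hy hz).2⟩

lemma norm_fibreParam_sq_le {y u : ℂ} {a : ℝ} (hu : u ∈ annulus a (2 * a))
    (hya : ‖y‖ ≤ 2 * a ^ 2) : ‖fibreParam y u‖ ^ 2 ≤ 4 * a ^ 2 := by
  obtain ⟨hau, hub⟩ := hu
  have ha : 0 < a := by linarith
  have hu0 : 0 < ‖u‖ := ha.trans hau
  have h1 : ‖u‖ ^ 2 ≤ 4 * a ^ 2 := by nlinarith
  have h2 : ‖y‖ ^ 2 / ‖u‖ ^ 2 ≤ 4 * a ^ 2 := by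
    rw [div_le_iff₀ (by positivity)]
    have : a ^ 2 ≤ ‖u‖ ^ 2 := by gcongr
    nlinarith [norm_nonneg y]
  rw [norm_fibreParam_sq]
  linarith

lemma le_norm_fibreParam_sq {y u : ℂ} {a : ℝ} (ha : 0 < a) (hu : u ∈ annulus a (2 * a)) :
    (4 * a ^ 4 + ‖y‖ ^ 2) / (8 * a ^ 2) ≤ ‖fibreParam y u‖ ^ 2 := by
  obtain ⟨hau, hub⟩ := hu
  have hu0 : 0 < ‖u‖ := ha.trans hau
  have h1 : a ^ 2 ≤ ‖u‖ ^ 2 := by gcongr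
  have h2 : ‖y‖ ^ 2 / (4 * a ^ 2) ≤ ‖y‖ ^ 2 / ‖u‖ ^ 2 := by
    gcongr
    nlinarith
  rw [norm_fibreParam_sq]
  calc (4 * a ^ 4 + ‖y‖ ^ 2) / (8 * a ^ 2) = (a ^ 2 + ‖y‖ ^ 2 / (4 * a ^ 2)) / 2 := by
        field_simp; ring
    _ ≤ _ := by gcongr

lemma mapsTo_fibreParam_fibrePiece {y : ℂ} {a : ℝ} (ha : 0 < a) (hya : ‖y‖ ≤ 2 * a ^ 2)
    (ha1 : 4 * a ^ 2 ≤ 1) : MapsTo (fibreParam y) (annulus a (2 * a)) (fibrePiece y a) := by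
  intro u hu
  have hu0 : u ≠ 0 := norm_pos_iff.mp (ha.trans hu.1)
  have hnorm : ‖fibreParam y u‖ ^ 2 ≤ 1 := (norm_fibreParam_sq_le hu hya).trans ha1
  refine ⟨⟨fibreParam_sq_add_sq y hu0, ?_⟩, ?_⟩
  · nlinarith [norm_nonneg (fibreParam y u)]
  · rwa [mem_preimage, nullCoord_fibreParam]

lemma localFibre_subset_iUnion_fibrePiece {y : ℂ} (hy : y ≠ 0) {M : ℕ}
    (hM : 8 / ‖y‖ < 2 ^ (M + 1)) :
    localFibre y ⊆ ⋃ k : Fin (M + 1), fibrePiece y (2 / 2 ^ (k : ℕ)) := by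
  intro z hz
  obtain ⟨hu, hzu⟩ := fibreParam_nullCoord hy hz.1
  set x := ‖nullCoord z‖
  have hx : 0 < x := norm_pos_iff.2 hu
  have hnorm : (x ^ 2 + ‖y‖ ^ 2 / x ^ 2) / 2 ≤ 1 := by
    rw [← norm_fibreParam_sq, hzu]; nlinarith [hz.2, norm_nonneg z]
  have hyx : ‖y‖ ^ 2 / x ^ 2 ≤ 2 := by nlinarith [sq_nonneg x]
  rw [div_le_iff₀ (by positivity)] at hyx
  have hx2 : x ≤ 2 := by nlinarith [div_nonneg (sq_nonneg ‖y‖) (sq_nonneg x)]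
  have hyx' : ‖y‖ < 2 * x := by nlinarith [norm_nonneg y]
  obtain ⟨k, hk1, hk2⟩ := exists_nat_pow_near (x := 4 / x) (by rw [le_div_iff₀ hx]; linarith)
    one_lt_two
  have hkM : k < M + 1 := by
    have h48 : 4 / x < 8 / ‖y‖ := by
      rw [div_lt_div_iff₀ hx (norm_pos_iff.2 hy)]; linarith
    exact (pow_lt_pow_iff_right₀ one_lt_two).1 (hk1.trans_lt (h48.trans hM))
  refine mem_iUnion.2 ⟨⟨k, hkM⟩, hz, ?_, ?_⟩
  · rw [pow_succ, div_lt_iff₀ hx] at hk2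
    rw [div_lt_iff₀ (by positivity)]
    linarith
  · rw [le_div_iff₀ hx] at hk1
    show x ≤ 2 * (2 / 2 ^ k)
    rw [mul_div_assoc', le_div_iff₀ (by positivity)]
    linarith

lemma pairwise_disjoint_fibrePiece_mul_two_pow (y : ℂ) (c : ℝ) :
    Pairwise (Disjoint on fun j : ℕ => fibrePiece y (c * 2 ^ j)) := by
  refine (pairwise_disjoint_on _).2 fun i j hij => disjoint_left.2 ?_
  rintro z ⟨-, hi1, hi2⟩ ⟨-, hj1, -⟩
  have hc : 0 < c := by
    by_contra! hc
    nlinarith [pow_pos (two_pos (α := ℝ)) i]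
  have : 2 * (c * 2 ^ i) ≤ c * 2 ^ j := by
    rw [← mul_assoc, mul_comm 2 c, mul_assoc, ← pow_succ']
    gcongr
    · norm_num
    · exact hij
  linarith

section HausdorffMeasure

variable [MeasurableSpace (EuclideanSpace ℂ (Fin 2))] [BorelSpace (EuclideanSpace ℂ (Fin 2))]

lemma measurableSet_fibrePiece (y : ℂ) (a : ℝ) : MeasurableSet (fibrePiece y a) := by
  have hfibre : IsClosed (localFibre y) := by
    refine (isClosed_eq ?_ continuous_const).inter (isClosed_le continuous_norm continuous_const)
    fun_prop
  have hann : MeasurableSet (annulus a (2 * a)) := by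
    rw [annulus_eq_diff]; exact measurableSet_closedBall.diff measurableSet_closedBall
  exact hfibre.measurableSet.inter (lipschitzWith_nullCoord.continuous.measurable hann)

lemma hausdorffMeasure_fibrePiece_le {y : ℂ} (hy : y ≠ 0) {a : ℝ} (ha : 0 < a) :
    μH[2] (fibrePiece y a) ≤ ENNReal.ofReal (12 * π * (a ^ 2 + ‖y‖) ^ 2 / a ^ 2) := by
  have hlip := (lipschitzOnWith_fibreParam y ha).mono fun u (hu : u ∈ annulus a (2 * a)) => hu.1.le
  calc μH[2] (fibrePiece y a) ≤ μH[2] (fibreParam y '' annulus a (2 * a)) :=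
        measure_mono (fibrePiece_subset_image hy a)
    _ ≤ ((1 + ‖y‖ / a ^ 2).toNNReal : ℝ≥0∞) ^ (2 : ℝ) * μH[2] (annulus a (2 * a)) :=
        hlip.hausdorffMeasure_image_le zero_le_two
    _ ≤ ENNReal.ofReal ((1 + ‖y‖ / a ^ 2) ^ 2) * (4 * ENNReal.ofReal (3 * π * a ^ 2)) := by
        gcongr
        · rw [ENNReal.rpow_two, ENNReal.ofReal_pow (by positivity)]; rfl
        · rw [← volume_annulus_two_mul ha.le]; exact hausdorffMeasure_two_le _
    _ = ENNReal.ofReal (12 * π * (a ^ 2 + ‖y‖) ^ 2 / a ^ 2) := by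
        rw [← ENNReal.ofReal_ofNat 4, ← ENNReal.ofReal_mul (by norm_num),
          ← ENNReal.ofReal_mul (by positivity)]
        congr 1
        field_simp
        ring

lemma ofReal_le_hausdorffMeasure_fibrePiece {y : ℂ} {a : ℝ} (ha : 0 < a)
    (hya : ‖y‖ ≤ 2 * a ^ 2) (ha1 : 4 * a ^ 2 ≤ 1) :
    ENNReal.ofReal (3 * π * a ^ 2) ≤ 4 * μH[2] (fibrePiece y a) := by
  have hsub : annulus a (2 * a) ⊆ nullCoord '' fibrePiece y a := fun u hu =>
    ⟨fibreParam y u, mapsTo_fibreParam_fibrePiece ha hya ha1 hu, nullCoord_fibreParam y u⟩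
  calc ENNReal.ofReal (3 * π * a ^ 2) = volume (annulus a (2 * a)) :=
        (volume_annulus_two_mul ha.le).symm
    _ ≤ μH[2] (annulus a (2 * a)) := volume_le_hausdorffMeasure_two _
    _ ≤ μH[2] (nullCoord '' fibrePiece y a) := measure_mono hsub
    _ ≤ ((2 : ℝ≥0) : ℝ≥0∞) ^ (2 : ℝ) * μH[2] (fibrePiece y a) :=
        lipschitzWith_nullCoord.hausdorffMeasure_image_le zero_le_two _
    _ = 4 * μH[2] (fibrePiece y a) := by rw [ENNReal.rpow_two]; norm_num

lemma setLIntegral_fibrePiece_le {y : ℂ} (hy : y ≠ 0) {a : ℝ} (ha : 0 < a) :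
    ∫⁻ z in fibrePiece y a, ENNReal.ofReal (‖z‖ ^ (-2 : ℝ)) ∂μH[2] ≤
      ENNReal.ofReal (192 * π) := by
  set c := 8 * a ^ 2 / (4 * a ^ 4 + ‖y‖ ^ 2)
  have hpt : ∀ z ∈ fibrePiece y a, ENNReal.ofReal (‖z‖ ^ (-2 : ℝ)) ≤ ENNReal.ofReal c := by
    intro z hz
    obtain ⟨u, hu, rfl⟩ := fibrePiece_subset_image hy a hz
    have h := le_norm_fibreParam_sq (y := y) ha hu
    rw [Real.rpow_neg (norm_nonneg _), Real.rpow_two]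
    refine ENNReal.ofReal_le_ofReal (inv_le_of_inv_le₀ (by positivity) ?_)
    rwa [inv_div]
  calc ∫⁻ z in fibrePiece y a, ENNReal.ofReal (‖z‖ ^ (-2 : ℝ)) ∂μH[2]
      ≤ ∫⁻ _ in fibrePiece y a, ENNReal.ofReal c ∂μH[2] := setLIntegral_mono measurable_const hpt
    _ = ENNReal.ofReal c * μH[2] (fibrePiece y a) := setLIntegral_const _ _
    _ ≤ ENNReal.ofReal c * ENNReal.ofReal (12 * π * (a ^ 2 + ‖y‖) ^ 2 / a ^ 2) := by
        gcongr; exact hausdorffMeasure_fibrePiece_le hy ha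
    _ ≤ ENNReal.ofReal (192 * π) := by
        rw [← ENNReal.ofReal_mul (by positivity)]
        apply ENNReal.ofReal_le_ofReal
        have key : 8 * (a ^ 2 + ‖y‖) ^ 2 ≤ 16 * (4 * a ^ 4 + ‖y‖ ^ 2) := by
          nlinarith [sq_nonneg (a ^ 2 - ‖y‖)]
        calc c * (12 * π * (a ^ 2 + ‖y‖) ^ 2 / a ^ 2)
            = 12 * π * (8 * (a ^ 2 + ‖y‖) ^ 2 / (4 * a ^ 4 + ‖y‖ ^ 2)) := by
              simp only [c]
              field_simp
          _ ≤ 12 * π * 16 := by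
              gcongr
              rwa [div_le_iff₀ (by positivity)]
          _ = 192 * π := by ring

lemma le_setLIntegral_fibrePiece {y : ℂ} (hy : y ≠ 0) {a : ℝ} (ha : 0 < a)
    (hya : ‖y‖ ≤ 2 * a ^ 2) (ha1 : 4 * a ^ 2 ≤ 1) :
    ENNReal.ofReal (3 * π / 16) ≤
      ∫⁻ z in fibrePiece y a, ENNReal.ofReal (‖z‖ ^ (-2 : ℝ)) ∂μH[2] := by
  have hpt : ∀ z ∈ fibrePiece y a,
      ENNReal.ofReal (1 / (4 * a ^ 2)) ≤ ENNReal.ofReal (‖z‖ ^ (-2 : ℝ)) := by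
    intro z hz
    obtain ⟨u, hu, rfl⟩ := fibrePiece_subset_image hy a hz
    have hpos : 0 < ‖fibreParam y u‖ ^ 2 :=
      (by positivity : (0 : ℝ) < (4 * a ^ 4 + ‖y‖ ^ 2) / (8 * a ^ 2)).trans_le
        (le_norm_fibreParam_sq ha hu)
    rw [Real.rpow_neg (norm_nonneg _), Real.rpow_two, one_div]
    gcongr
    exact norm_fibreParam_sq_le hu hya
  have hmeas : Measurable fun z : EuclideanSpace ℂ (Fin 2) => ENNReal.ofReal (‖z‖ ^ (-2 : ℝ)) := by
    fun_prop
  calc ENNReal.ofReal (3 * π / 16)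
      = ENNReal.ofReal (1 / (4 * a ^ 2)) * ENNReal.ofReal (3 * π * a ^ 2) / 4 := by
        rw [← ENNReal.ofReal_mul (by positivity), ← ENNReal.ofReal_ofNat 4,
          ← ENNReal.ofReal_div_of_pos (by norm_num)]
        congr 1
        field_simp
        norm_num
    _ ≤ ENNReal.ofReal (1 / (4 * a ^ 2)) * μH[2] (fibrePiece y a) := by
        refine ENNReal.div_le_of_le_mul ?_
        exact (mul_le_mul_right (ofReal_le_hausdorffMeasure_fibrePiece ha hya ha1) _).trans_eq
          (by ring)
    _ = ∫⁻ _ in fibrePiece y a, ENNReal.ofReal (1 / (4 * a ^ 2)) ∂μH[2] :=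
        (setLIntegral_const _ _).symm
    _ ≤ _ := setLIntegral_mono hmeas hpt

lemma lintegral_localFibre_le {y : ℂ} (hy0 : 0 < ‖y‖) (hy1 : ‖y‖ ≤ 1) :
    ∫⁻ z in localFibre y, ENNReal.ofReal (‖z‖ ^ (-2 : ℝ)) ∂μH[2] ≤
      ENNReal.ofReal (768 * π * (1 + Real.log (1 / ‖y‖))) := by
  have hy := norm_pos_iff.1 hy0
  obtain ⟨M, hM1, hM2⟩ := exists_nat_pow_near (x := 8 / ‖y‖)
    (by rw [le_div_iff₀ hy0]; linarith) one_lt_two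
  have hcount : (M + 1 : ℝ) ≤ 4 * (1 + Real.log (1 / ‖y‖)) := by
    have hlog := Real.le_log_of_pow_le two_pos hM1
    rw [show 8 / ‖y‖ = 2 ^ 3 * (1 / ‖y‖) by ring, Real.log_mul (by norm_num) (by positivity),
      Real.log_pow] at hlog
    have hL : 0 ≤ Real.log (1 / ‖y‖) := Real.log_nonneg (by rw [le_div_iff₀ hy0]; linarith)
    have h2 : 1 / 2 < Real.log 2 := by linarith [Real.log_two_gt_d9]
    push_cast at hlog
    nlinarith
  calc ∫⁻ z in localFibre y, ENNReal.ofReal (‖z‖ ^ (-2 : ℝ)) ∂μH[2]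
      ≤ ∫⁻ z in ⋃ k : Fin (M + 1), fibrePiece y (2 / 2 ^ (k : ℕ)),
          ENNReal.ofReal (‖z‖ ^ (-2 : ℝ)) ∂μH[2] :=
        lintegral_mono_set (localFibre_subset_iUnion_fibrePiece hy hM2)
    _ ≤ ∑' k : Fin (M + 1), ∫⁻ z in fibrePiece y (2 / 2 ^ (k : ℕ)),
          ENNReal.ofReal (‖z‖ ^ (-2 : ℝ)) ∂μH[2] := lintegral_iUnion_le _ _
    _ ≤ ∑' _ : Fin (M + 1), ENNReal.ofReal (192 * π) :=
        ENNReal.tsum_le_tsum fun _ => setLIntegral_fibrePiece_le hy (by positivity)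
    _ = ENNReal.ofReal ((M + 1 : ℕ) * (192 * π)) := by
        rw [tsum_fintype, Finset.sum_const, Finset.card_univ, Fintype.card_fin, nsmul_eq_mul,
          ENNReal.ofReal_mul (Nat.cast_nonneg _), ENNReal.ofReal_natCast]
    _ ≤ ENNReal.ofReal (768 * π * (1 + Real.log (1 / ‖y‖))) := by
        apply ENNReal.ofReal_le_ofReal
        push_cast
        nlinarith [Real.pi_pos]

lemma le_lintegral_localFibre {y : ℂ} (hy0 : 0 < ‖y‖) (hy1 : ‖y‖ ≤ 1 / 2) :
    ENNReal.ofReal (π / 16 * Real.log (1 / ‖y‖)) ≤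
      ∫⁻ z in localFibre y, ENNReal.ofReal (‖z‖ ^ (-2 : ℝ)) ∂μH[2] := by
  have hy := norm_pos_iff.1 hy0
  obtain ⟨N, hN1, hN2⟩ := exists_nat_pow_near (x := 1 / (2 * ‖y‖))
    (by rw [le_div_iff₀ (by positivity)]; linarith) (by norm_num : (1 : ℝ) < 4)
  have hcount : Real.log (1 / ‖y‖) ≤ 3 * (N + 1) := by
    have hlog := Real.log_lt_log (by positivity) hN2
    rw [Real.log_pow, show (4 : ℝ) = 2 ^ 2 by norm_num, Real.log_pow,
      show 1 / (2 * ‖y‖) = 2⁻¹ * (1 / ‖y‖) by ring, Real.log_mul (by norm_num) (by positivity),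
      Real.log_inv] at hlog
    have h2 : Real.log 2 < 1 := by linarith [Real.log_two_lt_d9]
    have h2' : 0 < Real.log 2 := Real.log_pos one_lt_two
    push_cast at hlog
    nlinarith
  set a : ℕ → ℝ := fun j => √(‖y‖ / 2) * 2 ^ j
  have ha_sq (j : ℕ) : a j ^ 2 = ‖y‖ / 2 * 4 ^ j := by
    rw [mul_pow, Real.sq_sqrt (by positivity), ← pow_mul, mul_comm j, pow_mul]
    norm_num
  have hpiece (j : ℕ) (hj : j ∈ Finset.range (N + 1)) : ENNReal.ofReal (3 * π / 16) ≤
      ∫⁻ z in fibrePiece y (a j), ENNReal.ofReal (‖z‖ ^ (-2 : ℝ)) ∂μH[2] := by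
    have h4 : (4 : ℝ) ^ j ≤ 4 ^ N :=
      pow_le_pow_right₀ (by norm_num) (Finset.mem_range_succ_iff.1 hj)
    refine le_setLIntegral_fibrePiece hy (by positivity) ?_ ?_ <;> rw [ha_sq]
    · nlinarith [one_le_pow₀ (by norm_num : (1 : ℝ) ≤ 4) (n := j)]
    · rw [le_div_iff₀ (by positivity)] at hN1
      nlinarith
  calc ENNReal.ofReal (π / 16 * Real.log (1 / ‖y‖))
      ≤ ENNReal.ofReal ((N + 1 : ℕ) * (3 * π / 16)) := by
        apply ENNReal.ofReal_le_ofReal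
        push_cast
        nlinarith [Real.pi_pos]
    _ = ∑ _ ∈ Finset.range (N + 1), ENNReal.ofReal (3 * π / 16) := by
        rw [Finset.sum_const, Finset.card_range, nsmul_eq_mul,
          ENNReal.ofReal_mul (Nat.cast_nonneg _), ENNReal.ofReal_natCast]
    _ ≤ ∑ j ∈ Finset.range (N + 1),
          ∫⁻ z in fibrePiece y (a j), ENNReal.ofReal (‖z‖ ^ (-2 : ℝ)) ∂μH[2] :=
        Finset.sum_le_sum hpiece
    _ = ∫⁻ z in ⋃ j ∈ Finset.range (N + 1), fibrePiece y (a j),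
          ENNReal.ofReal (‖z‖ ^ (-2 : ℝ)) ∂μH[2] :=
        (lintegral_biUnion_finset
          ((pairwise_disjoint_fibrePiece_mul_two_pow y _).set_pairwise _)
          (fun j _ => measurableSet_fibrePiece y (a j)) _).symm
    _ ≤ ∫⁻ z in localFibre y, ENNReal.ofReal (‖z‖ ^ (-2 : ℝ)) ∂μH[2] :=
        lintegral_mono_set (iUnion₂_subset fun _ _ => inter_subset_left)

end HausdorffMeasure

end OrdinaryDoublePoint

end

/-- For the two-dimensional ordinary double point local model (elliptic fibrations with
`I₁` singularities), the fibre integral of `‖z‖⁻²` over `{z₁² + z₂² = y, ‖z‖ ≤ 1}` with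
respect to the 2-dimensional Hausdorff measure diverges logarithmically in `y`:
it is bounded below by `c log(1/|y|)` and above by `C (1 + log(1/|y|))`. -/
theorem odp_fibre_integral_log_divergence
    [MeasurableSpace (EuclideanSpace ℂ (Fin 2))]
    [BorelSpace (EuclideanSpace ℂ (Fin 2))] :
    ∃ c : ℝ, 0 < c ∧ ∃ C : ℝ, 0 < C ∧
      ∀ y : ℂ, 0 < ‖y‖ → ‖y‖ ≤ 1 / 2 →
        ENNReal.ofReal (c * Real.log (1 / ‖y‖)) ≤
          (∫⁻ z in {z : EuclideanSpace ℂ (Fin 2) | z 0 ^ 2 + z 1 ^ 2 = y ∧ ‖z‖ ≤ 1},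
            ENNReal.ofReal (‖z‖ ^ (-2 : ℝ)) ∂(μH[(2 : ℝ)])) ∧
        (∫⁻ z in {z : EuclideanSpace ℂ (Fin 2) | z 0 ^ 2 + z 1 ^ 2 = y ∧ ‖z‖ ≤ 1},
            ENNReal.ofReal (‖z‖ ^ (-2 : ℝ)) ∂(μH[(2 : ℝ)]))
          ≤ ENNReal.ofReal (C * (1 + Real.log (1 / ‖y‖))) :=
  ⟨Real.pi / 16, by positivity, 768 * Real.pi, by positivity, fun _ hy0 hy1 =>
    ⟨OrdinaryDoublePoint.le_lintegral_localFibre hy0 hy1,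
      OrdinaryDoublePoint.lintegral_localFibre_le hy0 (hy1.trans (by norm_num))⟩⟩
end
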